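/- Let m > 0, a > 2, and C₀, C₁ ≥ 0. Let A, B, C : ℝ³ → ℝ be C¹ functions such that for all x with ‖x‖ ≥ 1 one has |A(x)|, |B(x)|, |C(x)| ≤ C₀‖x‖^{−a}, the first partial derivatives satisfy |∂ᵢA(x)|, |∂ᵢB(x)|, |∂ᵢC(x)| ≤ C₀‖x‖^{−a−1} for all i, and |∂ₓA(x) + ∂_yB(x) + ∂_zC(x)| ≤ C₁‖x‖^{−(m+3)}. Then there exist C¹ functions P, Q, R on {x ∈ ℝ³ : ‖x‖ > 1} and a constant C₂ ≥ 0, depending only on m, a, C₀, C₁, such that for all ‖x‖ > 1: |(∂_yR − ∂_zQ) − A| ≤ C₂‖x‖^{−(m+2)}, |(∂_zP − ∂ₓR) − B| ≤ C₂‖x‖^{−(m+2)}, and |(∂ₓQ − ∂_yP) − C| ≤ C₂‖x‖^{−(m+2)}. (Equivalently: the two-form ν = A dy∧dz + B dz∧dx + C dx∧dy admits a one-form primitive σ = P dx + Q dy + R dz with dσ = ν + O(‖x‖^{−(m+2)}).) -/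

import Mathlib

/-!
The primitive is the cone construction from infinity. Put `I_f(x) = ∫₁^∞ t f(tx) dt` and
`σ(x) = x × (I_A, I_B, I_C)(x)`. Since `a > 2`, all ray integrals converge and may be
differentiated under the integral sign, so `σ` is `C¹` on `{‖x‖ > 1}`. The identity
`curl (x × V) = x div V - 2V - (x·∇)V`, combined with Euler's relation
`2 I_f + (x·∇) I_f = -f` (the fundamental theorem of calculus for `t² f(tx)` on `[1, ∞)`),
gives `curl σ - ν = x ∫₁^∞ t² (div ν)(tx) dt`, and the decay of `div ν` bounds this by
`(C₁ / m) ‖x‖^{-(m+2)}`.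
-/

open Real MeasureTheory Set Filter Topology

/-- The `i`-th partial derivative of a function on `ℝ³`. -/
noncomputable def pd3 (f : EuclideanSpace ℝ (Fin 3) → ℝ)
    (i : Fin 3) (x : EuclideanSpace ℝ (Fin 3)) : ℝ :=
  fderiv ℝ f x (EuclideanSpace.single i 1)

variable {E F : Type*} [NormedAddCommGroup E] [NormedSpace ℝ E] [NormedAddCommGroup F]

def DecayBound (C q : ℝ) (g : E → F) : Prop :=
  ∀ y, 1 ≤ ‖y‖ → ‖g y‖ ≤ C * ‖y‖ ^ q

namespace DecayBound

variable {C p : ℝ} {g : E → F} {x : E} {t : ℝ}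

lemma norm_comp_smul_le (hg : DecayBound C (-p) g) (hx : 1 ≤ ‖x‖) (ht : 1 ≤ t) :
    ‖g (t • x)‖ ≤ C * ‖x‖ ^ (-p) * t ^ (-p) := by
  have ht0 : 0 < t := by linarith
  have h := hg (t • x) (by rw [norm_smul, norm_of_nonneg ht0.le]; nlinarith)
  rwa [norm_smul, norm_of_nonneg ht0.le, mul_rpow ht0.le (norm_nonneg x), mul_comm (t ^ _),
    ← mul_assoc] at h

lemma norm_comp_smul_le_of_le (hg : DecayBound C (-p) g) (hC : 0 ≤ C) (hp : 0 ≤ p) {r : ℝ}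
    (hr : 1 ≤ r) (hrx : r ≤ ‖x‖) (ht : 1 ≤ t) :
    ‖g (t • x)‖ ≤ C * r ^ (-p) * t ^ (-p) := by
  refine (hg.norm_comp_smul_le (hr.trans hrx) ht).trans ?_
  have hrpow : ‖x‖ ^ (-p) ≤ r ^ (-p) := rpow_le_rpow_of_nonpos (by linarith) hrx (by linarith)
  have := rpow_nonneg (zero_le_one.trans ht) (-p)
  gcongr

end DecayBound

variable [NormedSpace ℝ F]

structure HasDecayC1 (C p : ℝ) (f : E → F) : Prop where
  contDiff : ContDiff ℝ 1 f
  nonneg : 0 ≤ C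
  decay : DecayBound C (-p) f
  decay_fderiv : DecayBound C (-(p + 1)) (fderiv ℝ f)

noncomputable def rayIntegral (k : ℕ) (g : E → F) (x : E) : F :=
  ∫ t in Ioi (1 : ℝ), t ^ k • g (t • x)

lemma norm_pow_smul_le {t K p : ℝ} (ht : 0 < t) (k : ℕ) {v : F} (hv : ‖v‖ ≤ K * t ^ (-p)) :
    ‖t ^ k • v‖ ≤ K * t ^ ((k : ℝ) - p) := by
  rw [norm_smul, norm_pow, norm_of_nonneg ht.le, sub_eq_add_neg, rpow_add ht, rpow_natCast]
  calc t ^ k * ‖v‖ ≤ t ^ k * (K * t ^ (-p)) := by gcongr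
    _ = _ := by ring

lemma continuous_rayIntegrand {g : E → F} (hg : Continuous g) (k : ℕ) (x : E) :
    Continuous fun t : ℝ ↦ t ^ k • g (t • x) :=
  (continuous_pow k).smul (hg.comp (continuous_id.smul continuous_const))

namespace DecayBound

variable {C p : ℝ} {g : E → F} {x : E} {t : ℝ}

lemma integrableOn_rayIntegrand (hg : DecayBound C (-p) g) (hcont : Continuous g) {k : ℕ}
    (hk : (k : ℝ) + 1 < p) (hx : 1 ≤ ‖x‖) :
    IntegrableOn (fun t : ℝ ↦ t ^ k • g (t • x)) (Ioi 1) := by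
  refine Integrable.mono' ((integrableOn_Ioi_rpow_of_lt (by linarith : (k : ℝ) - p < -1)
    one_pos).const_mul (C * ‖x‖ ^ (-p))) (continuous_rayIntegrand hcont k x).aestronglyMeasurable
    ((ae_restrict_iff' measurableSet_Ioi).2 (ae_of_all _ fun t ht ↦
      norm_pow_smul_le (one_pos.trans ht) k (hg.norm_comp_smul_le hx (le_of_lt ht))))

lemma norm_rayIntegral_le (hg : DecayBound C (-p) g) {k : ℕ} (hk : (k : ℝ) + 1 < p)
    (hx : 1 ≤ ‖x‖) : ‖rayIntegral k g x‖ ≤ C / (p - k - 1) * ‖x‖ ^ (-p) := by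
  have hint := (integrableOn_Ioi_rpow_of_lt (by linarith : (k : ℝ) - p < -1)
    one_pos).const_mul (C * ‖x‖ ^ (-p))
  refine (norm_integral_le_of_norm_le hint ((ae_restrict_iff' measurableSet_Ioi).2
    (ae_of_all _ fun t ht ↦ norm_pow_smul_le (one_pos.trans ht) k
      (hg.norm_comp_smul_le hx (le_of_lt ht))))).trans_eq ?_
  rw [integral_const_mul, integral_Ioi_rpow_of_lt (by linarith) one_pos, one_rpow,
    show (k : ℝ) - p + 1 = -(p - k - 1) by ring, div_neg, neg_div, neg_neg]
  ring

lemma norm_rayIntegrand_le (hg : DecayBound C (-p) g) (hC : 0 ≤ C) (hp : 0 ≤ p) {r : ℝ}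
    (hr : 1 ≤ r) (hrx : r ≤ ‖x‖) (k : ℕ) (ht : 1 ≤ t) :
    ‖t ^ k • g (t • x)‖ ≤ C * r ^ (-p) * t ^ ((k : ℝ) - p) :=
  norm_pow_smul_le (by linarith) k (hg.norm_comp_smul_le_of_le hC hp hr hrx ht)

lemma continuousOn_rayIntegral (hg : DecayBound C (-p) g) (hcont : Continuous g) (hC : 0 ≤ C)
    {k : ℕ} (hk : (k : ℝ) + 1 < p) : ContinuousOn (rayIntegral k g) {x | 1 < ‖x‖} := by
  intro x₀ hx₀
  obtain ⟨r, hr, hrx₀⟩ := exists_between (show 1 < ‖x₀‖ from hx₀)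
  have hnear : ∀ᶠ x in 𝓝 x₀, r ≤ ‖x‖ :=
    (continuous_norm.tendsto x₀).eventually (eventually_ge_nhds hrx₀)
  refine (continuousAt_of_dominated (bound := fun t ↦ C * r ^ (-p) * t ^ ((k : ℝ) - p))
    (Eventually.of_forall fun x ↦ (continuous_rayIntegrand hcont k x).aestronglyMeasurable)
    (hnear.mono fun x hx ↦ ?_) ((integrableOn_Ioi_rpow_of_lt (by linarith) one_pos).const_mul _)
    (ae_of_all _ fun t ↦ ?_)) |>.continuousWithinAt
  · exact (ae_restrict_iff' measurableSet_Ioi).2 (ae_of_all _ fun t ht ↦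
      hg.norm_rayIntegrand_le hC (by linarith) hr.le hx k (le_of_lt ht))
  · exact (continuous_const.smul (hcont.comp (continuous_const.smul continuous_id))).continuousAt

end DecayBound

lemma Differentiable.hasFDerivAt_rayIntegrand {f : E → F} (hf : Differentiable ℝ f) (k : ℕ)
    (t : ℝ) (x : E) :
    HasFDerivAt (fun y ↦ t ^ k • f (t • y)) (t ^ (k + 1) • fderiv ℝ f (t • x)) x := by
  have h := ((hf (t • x)).hasFDerivAt.comp x ((hasFDerivAt_id x).const_smul t)).const_smul (t ^ k)
  refine h.congr_fderiv ?_
  ext v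
  simp [pow_succ, smul_smul]

lemma Differentiable.hasDerivAt_pow_smul_comp_smul {f : E → F} (hf : Differentiable ℝ f) (k : ℕ)
    (x : E) (t : ℝ) :
    HasDerivAt (fun s : ℝ ↦ s ^ (k + 1) • f (s • x))
      (((k : ℝ) + 1) • t ^ k • f (t • x) + t ^ (k + 1) • fderiv ℝ f (t • x) x) t := by
  have hray : HasDerivAt (fun s : ℝ ↦ s • x) x t := by
    simpa using (hasDerivAt_id t).smul_const x
  have hline : HasDerivAt (fun s : ℝ ↦ f (s • x)) (fderiv ℝ f (t • x) x) t :=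
    (hf (t • x)).hasFDerivAt.comp_hasDerivAt t hray
  refine ((hasDerivAt_pow (k + 1) t).smul hline).congr_deriv ?_
  push_cast
  rw [add_comm, smul_smul]

namespace HasDecayC1

variable {C p : ℝ} {f : E → F} {k : ℕ}

theorem hasFDerivAt_rayIntegral (hf : HasDecayC1 C p f) (hk : (k : ℝ) + 1 < p) {x₀ : E}
    (hx₀ : 1 < ‖x₀‖) :
    HasFDerivAt (rayIntegral k f) (rayIntegral (k + 1) (fderiv ℝ f) x₀) x₀ := by
  obtain ⟨r, hr, hrx₀⟩ := exists_between hx₀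
  have hnear : {x : E | r < ‖x‖} ∈ 𝓝 x₀ :=
    (isOpen_lt continuous_const continuous_norm).mem_nhds hrx₀
  refine hasFDerivAt_integral_of_dominated_of_fderiv_le (𝕜 := ℝ)
    (F := fun x t ↦ t ^ k • f (t • x)) (F' := fun x t ↦ t ^ (k + 1) • fderiv ℝ f (t • x))
    (μ := volume.restrict (Ioi 1))
    (bound := fun t ↦ C * r ^ (-(p + 1)) * t ^ (((k + 1 : ℕ) : ℝ) - (p + 1))) hnear
    (Eventually.of_forall fun x ↦
      (continuous_rayIntegrand hf.contDiff.continuous k x).aestronglyMeasurable)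
    (hf.decay.integrableOn_rayIntegrand hf.contDiff.continuous hk hx₀.le)
    (continuous_rayIntegrand (hf.contDiff.continuous_fderiv one_ne_zero) (k + 1) x₀
      |>.aestronglyMeasurable)
    ?_ ((integrableOn_Ioi_rpow_of_lt (by push_cast; linarith) one_pos).const_mul _)
    (ae_of_all _ fun t x _ ↦
      (hf.contDiff.differentiable one_ne_zero).hasFDerivAt_rayIntegrand k t x)
  exact (ae_restrict_iff' measurableSet_Ioi).2 (ae_of_all _ fun t ht x hx ↦
    hf.decay_fderiv.norm_rayIntegrand_le hf.nonneg (by linarith) hr.le hx.le (k + 1) ht.le)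

theorem contDiffOn_rayIntegral (hf : HasDecayC1 C p f) (hk : (k : ℝ) + 1 < p) :
    ContDiffOn ℝ 1 (rayIntegral k f) {x | 1 < ‖x‖} := by
  have hopen : IsOpen {x : E | 1 < ‖x‖} := isOpen_lt continuous_const continuous_norm
  refine fun x hx ↦ (contDiffAt_one_iff.2 ⟨_, _, hopen.mem_nhds hx, ?_,
    fun y hy ↦ hf.hasFDerivAt_rayIntegral hk hy⟩).contDiffWithinAt
  exact hf.decay_fderiv.continuousOn_rayIntegral (hf.contDiff.continuous_fderiv one_ne_zero)
    hf.nonneg (by push_cast; linarith)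

lemma integrableOn_rayIntegrand_fderiv (hf : HasDecayC1 C p f) (hk : (k : ℝ) + 1 < p)
    {x : E} (hx : 1 ≤ ‖x‖) :
    IntegrableOn (fun t : ℝ ↦ t ^ (k + 1) • fderiv ℝ f (t • x)) (Ioi 1) :=
  hf.decay_fderiv.integrableOn_rayIntegrand (hf.contDiff.continuous_fderiv one_ne_zero)
    (k := k + 1) (by push_cast; linarith) hx

lemma integrableOn_rayIntegrand_fderiv_apply (hf : HasDecayC1 C p f) (hk : (k : ℝ) + 1 < p)
    {x : E} (hx : 1 ≤ ‖x‖) (v : E) :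
    IntegrableOn (fun t : ℝ ↦ t ^ (k + 1) • fderiv ℝ f (t • x) v) (Ioi 1) :=
  (hf.integrableOn_rayIntegrand_fderiv hk hx).apply_continuousLinearMap v

lemma rayIntegral_fderiv_apply_add (hf : HasDecayC1 C p f) {g h : E → F} (hg : HasDecayC1 C p g)
    (hh : HasDecayC1 C p h) (hk : (k : ℝ) + 1 < p) {x : E} (hx : 1 ≤ ‖x‖) (u v w : E) :
    rayIntegral (k + 1) (fderiv ℝ f) x u + rayIntegral (k + 1) (fderiv ℝ g) x v
        + rayIntegral (k + 1) (fderiv ℝ h) x w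
      = rayIntegral (k + 1) (fun y ↦ fderiv ℝ f y u + fderiv ℝ g y v + fderiv ℝ h y w) x := by
  have hu := hf.integrableOn_rayIntegrand_fderiv_apply hk hx u
  have hv := hg.integrableOn_rayIntegrand_fderiv_apply hk hx v
  have hw := hh.integrableOn_rayIntegrand_fderiv_apply hk hx w
  simp only [rayIntegral, smul_add]
  rw [ContinuousLinearMap.integral_apply (hf.integrableOn_rayIntegrand_fderiv hk hx),
    ContinuousLinearMap.integral_apply (hg.integrableOn_rayIntegrand_fderiv hk hx),
    ContinuousLinearMap.integral_apply (hh.integrableOn_rayIntegrand_fderiv hk hx)]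
  simp only [_root_.smul_apply]
  rw [← integral_add hu hv]
  exact (integral_add (hu.add hv) hw).symm

/-- Euler's relation `∫₁^∞ d/dt (t^{k+1} f(tx)) dt = -f(x)`, written out with the chain rule. -/
theorem add_one_smul_rayIntegral_add_rayIntegral_fderiv [CompleteSpace F] (hf : HasDecayC1 C p f)
    (hk : (k : ℝ) + 1 < p) {x : E} (hx : 1 ≤ ‖x‖) :
    ((k : ℝ) + 1) • rayIntegral k f x + rayIntegral (k + 1) (fderiv ℝ f) x x = -f x := by
  have hdiff := hf.contDiff.differentiable one_ne_zero
  have hint := hf.decay.integrableOn_rayIntegrand hf.contDiff.continuous hk hx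
  have hint' := hf.integrableOn_rayIntegrand_fderiv hk hx
  have hlim : Tendsto (fun t : ℝ ↦ t ^ (k + 1) • f (t • x)) atTop (𝓝 0) := by
    refine squeeze_zero_norm' ?_ (by simpa using (tendsto_rpow_neg_atTop
      (by linarith : 0 < p - (k + 1))).const_mul (C * ‖x‖ ^ (-p)))
    filter_upwards [eventually_ge_atTop 1] with t ht
    convert norm_pow_smul_le (by linarith) (k + 1) (hf.decay.norm_comp_smul_le hx ht) using 3
    push_cast
    ring
  have hint₁ : IntegrableOn (fun t : ℝ ↦ ((k : ℝ) + 1) • t ^ k • f (t • x)) (Ioi 1) :=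
    hint.smul _
  have hint₂ := hf.integrableOn_rayIntegrand_fderiv_apply hk hx x
  rw [rayIntegral, rayIntegral, ContinuousLinearMap.integral_apply hint', ← integral_smul]
  simp only [_root_.smul_apply]
  rw [← integral_add hint₁ hint₂, integral_Ioi_of_hasDerivAt_of_tendsto'
      (fun t _ ↦ hdiff.hasDerivAt_pow_smul_comp_smul k x t) (hint₁.add hint₂) hlim]
  simp

end HasDecayC1

section Euclidean3

local notation "ℝ³" => EuclideanSpace ℝ (Fin 3)

lemma sum_fin_three_eq_of_ne {M : Type*} [AddCommMonoid M] {i j k : Fin 3} (hij : i ≠ j)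
    (hjk : j ≠ k) (hik : i ≠ k) (F : Fin 3 → M) : ∑ l, F l = F i + F j + F k := by
  fin_cases i <;> fin_cases j <;> fin_cases k <;> simp_all [Fin.sum_univ_three] <;> abel

lemma ContinuousLinearMap.apply_eq_sum_single (L : ℝ³ →L[ℝ] ℝ) (v : ℝ³) :
    L v = ∑ i, v i * L (EuclideanSpace.single i 1) := by
  conv_lhs => rw [← (EuclideanSpace.basisFun (Fin 3) ℝ).sum_repr v]
  simp [EuclideanSpace.basisFun_apply]

lemma norm_fderiv_le_of_abs_pd3_le {f : ℝ³ → ℝ} {x : ℝ³} {c : ℝ} (h : ∀ i, |pd3 f i x| ≤ c) :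
    ‖fderiv ℝ f x‖ ≤ 3 * c := by
  refine ContinuousLinearMap.opNorm_le_bound _ (by linarith [(abs_nonneg _).trans (h 0)])
    fun v ↦ ?_
  rw [(fderiv ℝ f x).apply_eq_sum_single, norm_eq_abs]
  refine (Finset.abs_sum_le_sum_abs _ _).trans ?_
  calc ∑ i, |v i * pd3 f i x| ≤ ∑ _i : Fin 3, ‖v‖ * c := Finset.sum_le_sum fun i _ ↦ by
        rw [abs_mul]
        exact mul_le_mul (PiLp.norm_apply_le v i) (h i) (abs_nonneg _) (norm_nonneg _)
    _ = 3 * c * ‖v‖ := by simp; ring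

lemma HasDecayC1.of_abs_pd3_le {f : ℝ³ → ℝ} {C a : ℝ} (hC : 0 ≤ C) (hf : ContDiff ℝ 1 f)
    (h₀ : ∀ x : ℝ³, 1 ≤ ‖x‖ → |f x| ≤ C * ‖x‖ ^ (-a))
    (h₁ : ∀ x : ℝ³, 1 ≤ ‖x‖ → ∀ i, |pd3 f i x| ≤ C * ‖x‖ ^ (-a - 1)) :
    HasDecayC1 (3 * C) a f where
  contDiff := hf
  nonneg := by positivity
  decay x hx := (h₀ x hx).trans <|
    mul_le_mul_of_nonneg_right (by linarith) (rpow_nonneg (norm_nonneg x) _)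
  decay_fderiv x hx := by
    rw [neg_add', mul_assoc]
    exact norm_fderiv_le_of_abs_pd3_le (h₁ x hx)

/-- With `I_f = rayIntegral 1 f`, the components of `σ(x) = x × (I_A, I_B, I_C)(x)` are
`conePrimitive C B 1 2`, `conePrimitive A C 2 0` and `conePrimitive B A 0 1`. -/
noncomputable def conePrimitive (f g : ℝ³ → ℝ) (j k : Fin 3) (x : ℝ³) : ℝ :=
  x j * rayIntegral 1 f x - x k * rayIntegral 1 g x

variable {C a : ℝ} {f g h : ℝ³ → ℝ} {x : ℝ³}

lemma hasFDerivAt_coord_mul_rayIntegral (hf : HasDecayC1 C a f) (ha : 2 < a) (hx : 1 < ‖x‖)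
    (j : Fin 3) :
    HasFDerivAt (fun y : ℝ³ ↦ y j * rayIntegral 1 f y)
      (x j • rayIntegral 2 (fderiv ℝ f) x + rayIntegral 1 f x • EuclideanSpace.proj j) x :=
  (EuclideanSpace.proj j : ℝ³ →L[ℝ] ℝ).hasFDerivAt.mul
    (hf.hasFDerivAt_rayIntegral (k := 1) (by norm_num; linarith) hx)

lemma contDiffOn_conePrimitive (hf : HasDecayC1 C a f) (hg : HasDecayC1 C a g) (ha : 2 < a)
    (j k : Fin 3) : ContDiffOn ℝ 1 (conePrimitive f g j k) {x | 1 < ‖x‖} := by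
  have hI := fun {φ : ℝ³ → ℝ} (hφ : HasDecayC1 C a φ) ↦
    hφ.contDiffOn_rayIntegral (k := 1) (by norm_num; linarith)
  exact ((EuclideanSpace.proj j : ℝ³ →L[ℝ] ℝ).contDiff.contDiffOn.mul (hI hf)).sub
    ((EuclideanSpace.proj k : ℝ³ →L[ℝ] ℝ).contDiff.contDiffOn.mul (hI hg))

lemma pd3_conePrimitive (hf : HasDecayC1 C a f) (hg : HasDecayC1 C a g) (ha : 2 < a)
    (hx : 1 < ‖x‖) (i j k : Fin 3) :
    pd3 (conePrimitive f g j k) i x =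
      x j * rayIntegral 2 (fderiv ℝ f) x (EuclideanSpace.single i 1)
        + (EuclideanSpace.single i 1 : ℝ³) j * rayIntegral 1 f x
      - (x k * rayIntegral 2 (fderiv ℝ g) x (EuclideanSpace.single i 1)
        + (EuclideanSpace.single i 1 : ℝ³) k * rayIntegral 1 g x) := by
  have hD : HasFDerivAt (conePrimitive f g j k) _ x :=
    (hasFDerivAt_coord_mul_rayIntegral hf ha hx j).sub
      (hasFDerivAt_coord_mul_rayIntegral hg ha hx k)
  rw [pd3, hD.fderiv]
  simp [smul_eq_mul]

/-- The terms not involving the divergence combine into `2 I_f(x) + D I_f(x) x`, which is `-f(x)`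
by Euler's relation. -/
theorem curl_conePrimitive_sub_eq (hf : HasDecayC1 C a f) (hg : HasDecayC1 C a g)
    (hh : HasDecayC1 C a h) (ha : 2 < a) {i j k : Fin 3} (hij : i ≠ j) (hjk : j ≠ k)
    (hik : i ≠ k) (hx : 1 < ‖x‖) :
    pd3 (conePrimitive g f i j) j x - pd3 (conePrimitive f h k i) k x - f x
      = x i * rayIntegral 2 (fun y ↦ pd3 f i y + pd3 g j y + pd3 h k y) x := by
  have ha' : ((1 : ℕ) : ℝ) + 1 < a := by norm_num; linarith
  have euler : 2 * rayIntegral 1 f x + rayIntegral 2 (fderiv ℝ f) x x = -f x := by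
    simpa [one_add_one_eq_two] using hf.add_one_smul_rayIntegral_add_rayIntegral_fderiv ha' hx.le
  have hdiv : rayIntegral 2 (fderiv ℝ f) x (EuclideanSpace.single i 1)
      + rayIntegral 2 (fderiv ℝ g) x (EuclideanSpace.single j 1)
      + rayIntegral 2 (fderiv ℝ h) x (EuclideanSpace.single k 1)
      = rayIntegral 2 (fun y ↦ pd3 f i y + pd3 g j y + pd3 h k y) x :=
    hf.rayIntegral_fderiv_apply_add hg hh ha' hx.le _ _ _
  rw [ContinuousLinearMap.apply_eq_sum_single, sum_fin_three_eq_of_ne hij hjk hik] at euler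
  rw [pd3_conePrimitive hg hf ha hx, pd3_conePrimitive hf hh ha hx, ← hdiv]
  simp only [PiLp.single_apply, hij, hik, if_true, if_false]
  linear_combination -euler

lemma abs_coord_mul_rayIntegral_le {m C₁ : ℝ} (hm : 0 < m) {d : ℝ³ → ℝ}
    (hd : DecayBound C₁ (-(m + 3)) d) (hx : 1 ≤ ‖x‖) (i : Fin 3) :
    |x i * rayIntegral 2 d x| ≤ C₁ / m * ‖x‖ ^ (-(m + 2)) := by
  have hbound := hd.norm_rayIntegral_le (k := 2) (by norm_num; linarith) hx
  have hx0 : 0 < ‖x‖ := by linarith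
  rw [abs_mul]
  calc |x i| * |rayIntegral 2 d x| ≤ ‖x‖ * (C₁ / (m + 3 - (2 : ℕ) - 1) * ‖x‖ ^ (-(m + 3))) :=
        mul_le_mul (PiLp.norm_apply_le x i) hbound (abs_nonneg _) hx0.le
    _ = C₁ / m * ‖x‖ ^ (-(m + 2)) := by
        rw [show -(m + 2) = 1 + -(m + 3) by ring, rpow_add hx0, rpow_one]
        push_cast
        ring_nf

end Euclidean3

/-- Approximate Poincaré lemma (quantitative form): if the two-form
`ν = A dy∧dz + B dz∧dx + C dx∧dy` has coefficients decaying like `r^{−a}`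
(`a > 2`), first derivatives decaying like `r^{−a−1}`, and `dν = O(r^{−(m+3)})`,
then there is a one-form `σ = P dx + Q dy + R dz`, of class `C¹` on `{r > 1}`,
with `dσ = ν + O(r^{−(m+2)})`, where the constant in the error term depends only
on `m, a, C₀, C₁`. -/
theorem approximate_poincare_lemma (m a C₀ C₁ : ℝ)
    (hm : 0 < m) (ha : 2 < a) (hC₀ : 0 ≤ C₀) (hC₁ : 0 ≤ C₁) :
    ∃ C₂ : ℝ, 0 ≤ C₂ ∧
      ∀ A B C : EuclideanSpace ℝ (Fin 3) → ℝ,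
        ContDiff ℝ 1 A → ContDiff ℝ 1 B → ContDiff ℝ 1 C →
        (∀ x : EuclideanSpace ℝ (Fin 3), 1 ≤ ‖x‖ →
          |A x| ≤ C₀ * ‖x‖ ^ (-a) ∧ |B x| ≤ C₀ * ‖x‖ ^ (-a) ∧
          |C x| ≤ C₀ * ‖x‖ ^ (-a)) →
        (∀ x : EuclideanSpace ℝ (Fin 3), 1 ≤ ‖x‖ → ∀ i : Fin 3,
          |pd3 A i x| ≤ C₀ * ‖x‖ ^ (-a - 1) ∧ |pd3 B i x| ≤ C₀ * ‖x‖ ^ (-a - 1) ∧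
          |pd3 C i x| ≤ C₀ * ‖x‖ ^ (-a - 1)) →
        (∀ x : EuclideanSpace ℝ (Fin 3), 1 ≤ ‖x‖ →
          |pd3 A 0 x + pd3 B 1 x + pd3 C 2 x| ≤ C₁ * ‖x‖ ^ (-(m + 3))) →
        ∃ P Q R : EuclideanSpace ℝ (Fin 3) → ℝ,
          ContDiffOn ℝ 1 P {x : EuclideanSpace ℝ (Fin 3) | 1 < ‖x‖} ∧
          ContDiffOn ℝ 1 Q {x : EuclideanSpace ℝ (Fin 3) | 1 < ‖x‖} ∧
          ContDiffOn ℝ 1 R {x : EuclideanSpace ℝ (Fin 3) | 1 < ‖x‖} ∧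
          ∀ x : EuclideanSpace ℝ (Fin 3), 1 < ‖x‖ →
            |(pd3 R 1 x - pd3 Q 2 x) - A x| ≤ C₂ * ‖x‖ ^ (-(m + 2)) ∧
            |(pd3 P 2 x - pd3 R 0 x) - B x| ≤ C₂ * ‖x‖ ^ (-(m + 2)) ∧
            |(pd3 Q 0 x - pd3 P 1 x) - C x| ≤ C₂ * ‖x‖ ^ (-(m + 2)) := by
  refine ⟨C₁ / m, div_nonneg hC₁ hm.le, fun A B C hA hB hC h₀ h₁ hdiv ↦ ?_⟩
  have dA := HasDecayC1.of_abs_pd3_le hC₀ hA (fun x hx ↦ (h₀ x hx).1) fun x hx i ↦ (h₁ x hx i).1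
  have dB := HasDecayC1.of_abs_pd3_le hC₀ hB (fun x hx ↦ (h₀ x hx).2.1)
    fun x hx i ↦ (h₁ x hx i).2.1
  have dC := HasDecayC1.of_abs_pd3_le hC₀ hC (fun x hx ↦ (h₀ x hx).2.2)
    fun x hx i ↦ (h₁ x hx i).2.2
  refine ⟨conePrimitive C B 1 2, conePrimitive A C 2 0, conePrimitive B A 0 1,
    contDiffOn_conePrimitive dC dB ha 1 2, contDiffOn_conePrimitive dA dC ha 2 0,
    contDiffOn_conePrimitive dB dA ha 0 1, fun x hx ↦ ⟨?_, ?_, ?_⟩⟩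
  · rw [curl_conePrimitive_sub_eq dA dB dC ha (by decide) (by decide) (by decide) hx]
    exact abs_coord_mul_rayIntegral_le hm hdiv hx.le 0
  · rw [curl_conePrimitive_sub_eq dB dC dA ha (by decide) (by decide) (by decide) hx]
    refine abs_coord_mul_rayIntegral_le hm (fun y hy ↦ ?_) hx.le 1
    rw [norm_eq_abs]
    convert hdiv y hy using 2
    ring
  · rw [curl_conePrimitive_sub_eq dC dA dB ha (by decide) (by decide) (by decide) hx]
    refine abs_coord_mul_rayIntegral_le hm (fun y hy ↦ ?_) hx.le 2
    rw [norm_eq_abs]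
    convert hdiv y hy using 2
    ring
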